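/- arXiv:2403.18217 — 3 statements merged into one kernel-verified Lean document; each statement's English description precedes it below -/
import Mathlib

section
/- Let X and Y be real Hilbert spaces, B a densely defined linear operator from X to Y with dense domain W, and B† its adjoint. Let C : Y → Y be a bounded self-adjoint linear operator with 0 ≤ ⟪C y, y⟫ ≤ λ_max ‖y‖² for all y ∈ Y, and let c ≥ 0. Suppose φ ∈ W and F ∈ X satisfy ⟪C(Bφ), Bψ⟫_Y = ⟪F, ψ⟫_X for all ψ ∈ W, together with the stability bound ‖φ‖_X ≤ c ‖F‖_X. Then Φ := −C(Bφ) belongs to dom B† and satisfies ‖Φ‖_Y² + ‖B†Φ‖_X² ≤ (1 + λ_max c) ‖F‖_X². (This is the stability estimate (3.12) in the proof of the paper's Theorem 3.2.) -/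
/-!
The weak equation says `⟪Bψ, -C(Bφ)⟫ = ⟪-F, ψ⟫` on the dense domain `W`, so `Φ = -C(Bφ)` lies in
`dom B†` with `B†Φ = -F`. For `0 ≤ C ≤ λ_max`, Cauchy–Schwarz for the semi-inner product
`⟪C ·, ·⟫` gives `‖C y‖² ≤ λ_max ⟪C y, y⟫`, and at `y = Bφ` the energy is
`⟪F, φ⟫ ≤ ‖F‖ ‖φ‖ ≤ c ‖F‖²`.
-/

open RealInnerProductSpace

section PositiveOperator

variable {Y : Type*} [NormedAddCommGroup Y] [InnerProductSpace ℝ Y] {C : Y →ₗ[ℝ] Y}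

theorem LinearMap.IsPositive.inner_sq_le (hC : C.IsPositive) (x y : Y) :
    ⟪C x, y⟫ ^ 2 ≤ ⟪C x, x⟫ * ⟪C y, y⟫ := by
  have hsymm : ⟪C y, x⟫ = ⟪C x, y⟫ := by rw [hC.isSymmetric y x, real_inner_comm]
  have h := LinearMap.BilinForm.apply_mul_apply_le_of_forall_zero_le ((innerₗ Y).comp C)
    hC.inner_nonneg_left x y
  simp only [LinearMap.comp_apply, innerₗ_apply_apply, hsymm] at h
  rwa [sq]

theorem LinearMap.IsPositive.norm_sq_apply_le (hC : C.IsPositive) {lmax : ℝ}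
    (hle : ∀ y, ⟪C y, y⟫ ≤ lmax * ‖y‖ ^ 2) (y : Y) :
    ‖C y‖ ^ 2 ≤ lmax * ⟪C y, y⟫ := by
  rcases eq_or_ne (C y) 0 with hy | hy
  · simp [hy]
  have hCy : ⟪C y, C y⟫ = ‖C y‖ ^ 2 := real_inner_self_eq_norm_sq _
  have key : ‖C y‖ ^ 2 * ‖C y‖ ^ 2 ≤ (lmax * ⟪C y, y⟫) * ‖C y‖ ^ 2 := by
    calc ‖C y‖ ^ 2 * ‖C y‖ ^ 2 = ⟪C y, C y⟫ ^ 2 := by rw [hCy]; ring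
      _ ≤ ⟪C y, y⟫ * ⟪C (C y), C y⟫ := hC.inner_sq_le y (C y)
      _ ≤ ⟪C y, y⟫ * (lmax * ‖C y‖ ^ 2) :=
          mul_le_mul_of_nonneg_left (hle (C y)) (hC.inner_nonneg_left y)
      _ = (lmax * ⟪C y, y⟫) * ‖C y‖ ^ 2 := by ring
  exact le_of_mul_le_mul_right key (by positivity)

end PositiveOperator

section DenselyDefinedAdjoint

variable {X Y : Type*} [NormedAddCommGroup X] [InnerProductSpace ℝ X]
  [NormedAddCommGroup Y] [InnerProductSpace ℝ Y]
  {W : Submodule ℝ X} {B : W →ₗ[ℝ] Y} {domA : Set Y} {Badj : Y → X}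

theorem mem_dom_and_adjoint_eq_of_inner_eq (hW : Dense (W : Set X))
    (hdom : ∀ Φ : Y, Φ ∈ domA ↔ ∃ G : X, ∀ ψ : W, ⟪B ψ, Φ⟫ = ⟪G, (ψ : X)⟫)
    (hadj : ∀ Φ ∈ domA, ∀ ψ : W, ⟪Badj Φ, (ψ : X)⟫ = ⟪B ψ, Φ⟫)
    {Φ : Y} {G : X} (h : ∀ ψ : W, ⟪B ψ, Φ⟫ = ⟪G, (ψ : X)⟫) :
    Φ ∈ domA ∧ Badj Φ = G := by
  have hΦ : Φ ∈ domA := (hdom Φ).2 ⟨G, h⟩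
  exact ⟨hΦ, hW.eq_of_inner_left ℝ fun v hv => (hadj Φ hΦ ⟨v, hv⟩).trans (h ⟨v, hv⟩)⟩

end DenselyDefinedAdjoint

theorem stmt6_general
    {X Y : Type*} [NormedAddCommGroup X] [InnerProductSpace ℝ X]
    [NormedAddCommGroup Y] [InnerProductSpace ℝ Y]
    (W : Submodule ℝ X) (hW : Dense (W : Set X))
    (B : W →ₗ[ℝ] Y) (domA : Set Y) (Badj : Y → X)
    (hdom : ∀ Φ : Y, Φ ∈ domA ↔ ∃ G : X, ∀ ψ : W, ⟪B ψ, Φ⟫ = ⟪G, (ψ : X)⟫)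
    (hadj : ∀ Φ ∈ domA, ∀ ψ : W, ⟪Badj Φ, (ψ : X)⟫ = ⟪B ψ, Φ⟫)
    (C : Y →L[ℝ] Y) (lmax c : ℝ)
    (hsa : ∀ x y : Y, ⟪C x, y⟫ = ⟪x, C y⟫)
    (hbound : ∀ y : Y, 0 ≤ ⟪C y, y⟫ ∧ ⟪C y, y⟫ ≤ lmax * ‖y‖ ^ 2)
    (φ : W) (F : X)
    (hsol : ∀ ψ : W, ⟪C (B φ), B ψ⟫ = ⟪F, (ψ : X)⟫)
    (hstab : ‖(φ : X)‖ ≤ c * ‖F‖) :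
    -(C (B φ)) ∈ domA ∧
      ‖-(C (B φ))‖ ^ 2 + ‖Badj (-(C (B φ)))‖ ^ 2 ≤ (1 + lmax * c) * ‖F‖ ^ 2 := by
  have hC : (C : Y →ₗ[ℝ] Y).IsPositive := ⟨hsa, fun y => (hbound y).1⟩
  obtain ⟨hmem, hB⟩ := mem_dom_and_adjoint_eq_of_inner_eq (G := -F) hW hdom hadj fun ψ => by
    rw [inner_neg_right, inner_neg_left, real_inner_comm, hsol ψ]
  refine ⟨hmem, ?_⟩
  rw [hB, norm_neg, norm_neg]
  suffices ‖C (B φ)‖ ^ 2 ≤ lmax * (c * ‖F‖ ^ 2) by linarith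
  rcases eq_or_ne (C (B φ)) 0 with hCy | hCy
  · -- then `Badj 0` equals both `0` and `-F`
    have hF : -F = 0 := hB.symm.trans <| hCy ▸
      (mem_dom_and_adjoint_eq_of_inner_eq hW hdom hadj fun ψ => by simp).2
    simp [hCy, neg_eq_zero.mp hF]
  have henergy : ⟪C (B φ), B φ⟫ ≤ c * ‖F‖ ^ 2 := by
    calc ⟪C (B φ), B φ⟫ = ⟪F, (φ : X)⟫ := hsol φ
      _ ≤ ‖F‖ * ‖(φ : X)‖ := real_inner_le_norm _ _
      _ ≤ ‖F‖ * (c * ‖F‖) := mul_le_mul_of_nonneg_left hstab (norm_nonneg F)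
      _ = c * ‖F‖ ^ 2 := by ring
  have hnorm : ‖C (B φ)‖ ^ 2 ≤ lmax * ⟪C (B φ), B φ⟫ :=
    hC.norm_sq_apply_le (fun y => (hbound y).2) (B φ)
  have hlmax : 0 ≤ lmax := by
    by_contra! hneg
    nlinarith [(hbound (B φ)).1, norm_pos_iff.mpr hCy]
  exact hnorm.trans (mul_le_mul_of_nonneg_left henergy hlmax)

/-- The stability estimate (3.12) in the proof of the paper's Theorem 3.2:
if `φ ∈ W` solves the displacement-based problem for `F` with stability `‖φ‖ ≤ c‖F‖`,
then `Φ = −C(Bφ)` lies in the domain of the adjoint `B†` and its graph norm squared is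
bounded by `(1 + λ_max c)‖F‖²`. `W` is the dense domain of the densely defined operator
`B : W → Y`, `domA` is the domain of `B†` (characterized by `hdom`), and `Badj`
realizes `B†` (characterized by `hadj`). -/
theorem stmt6
    {X Y : Type*} [NormedAddCommGroup X] [InnerProductSpace ℝ X] [CompleteSpace X]
    [NormedAddCommGroup Y] [InnerProductSpace ℝ Y] [CompleteSpace Y]
    (W : Submodule ℝ X) (hW : Dense (W : Set X))
    (B : W →ₗ[ℝ] Y) (domA : Set Y) (Badj : Y → X)
    (hdom : ∀ Φ : Y, Φ ∈ domA ↔ ∃ G : X, ∀ ψ : W, ⟪B ψ, Φ⟫ = ⟪G, (ψ : X)⟫)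
    (hadj : ∀ Φ ∈ domA, ∀ ψ : W, ⟪Badj Φ, (ψ : X)⟫ = ⟪B ψ, Φ⟫)
    (C : Y →L[ℝ] Y) (lmax c : ℝ) (hc : 0 ≤ c)
    (hsa : ∀ x y : Y, ⟪C x, y⟫ = ⟪x, C y⟫)
    (hbound : ∀ y : Y, 0 ≤ ⟪C y, y⟫ ∧ ⟪C y, y⟫ ≤ lmax * ‖y‖ ^ 2)
    (φ : W) (F : X)
    (hsol : ∀ ψ : W, ⟪C (B φ), B ψ⟫ = ⟪F, (ψ : X)⟫)
    (hstab : ‖(φ : X)‖ ≤ c * ‖F‖) :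
    -(C (B φ)) ∈ domA ∧
      ‖-(C (B φ))‖ ^ 2 + ‖Badj (-(C (B φ)))‖ ^ 2 ≤ (1 + lmax * c) * ‖F‖ ^ 2 :=
  stmt6_general W hW B domA Badj hdom hadj C lmax c hsa hbound φ F hsol hstab
end

section
/- Let X and Y be real Hilbert spaces, B a densely defined linear operator from X to Y with dense domain W, and B† its adjoint. Let C : Y → Y be a bounded self-adjoint linear operator with 0 ≤ ⟪C y, y⟫ ≤ λ_max ‖y‖² for all y ∈ Y (λ_max > 0), and let c > 0. Assume that for every ψ ∈ X there exists φ^ψ ∈ W such that ⟪C(Bφ^ψ), Bv⟫_Y = −⟪ψ, v⟫_X for all v ∈ W and ‖φ^ψ‖_X ≤ c ‖ψ‖_X. Then the inf-sup condition holds with constant β = (1 + c λ_max)^{-1/2}: for every ψ ∈ X, sup over nonzero Φ ∈ dom B† of ⟪B†Φ, ψ⟫_X / (‖Φ‖_Y² + ‖B†Φ‖_X²)^{1/2} is at least (1 + c λ_max)^{-1/2} ‖ψ‖_X. (Brezzi condition (4) in the paper's Theorem 3.2.) -/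
open RealInnerProductSpace

/-- Orthogonality to a dense submodule implies zero. -/
lemma dense_orth_zero {X : Type*} [NormedAddCommGroup X] [InnerProductSpace ℝ X]
    (W : Submodule ℝ X) (hW : Dense (W : Set X)) (x : X)
    (h : ∀ v : W, ⟪x, (v : X)⟫ = 0) : x = 0 := by
  have hcont : Continuous fun y : X => ⟪x, y⟫ := continuous_const.inner continuous_id
  have heq : (fun y : X => ⟪x, y⟫) = fun _ => (0 : ℝ) :=
    hcont.ext_on hW continuous_const (fun v hv => h ⟨v, hv⟩)
  have := congrFun heq x
  simpa [real_inner_self_eq_norm_sq] using (by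
    have h0 : ‖x‖ ^ 2 = 0 := by
      have := congrFun heq x
      rwa [real_inner_self_eq_norm_sq] at this
    have : ‖x‖ = 0 := by nlinarith [norm_nonneg x]
    exact norm_eq_zero.mp this)

/-- Cauchy–Schwarz for the PSD form `⟪C·,·⟫`. -/
lemma psd_cs {Y : Type*} [NormedAddCommGroup Y] [InnerProductSpace ℝ Y]
    (C : Y →L[ℝ] Y) (hsa : ∀ x y : Y, ⟪C x, y⟫ = ⟪x, C y⟫)
    (hpos : ∀ y : Y, 0 ≤ ⟪C y, y⟫) (u v : Y) :
    ⟪C u, v⟫ ^ 2 ≤ ⟪C u, u⟫ * ⟪C v, v⟫ := by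
  have key : ∀ t : ℝ, 0 ≤ ⟪C v, v⟫ * (t * t) + (2 * ⟪C u, v⟫) * t + ⟪C u, u⟫ := by
    intro t
    have h := hpos (u + t • v)
    have hx : ⟪C (u + t • v), u + t • v⟫ =
        ⟪C v, v⟫ * (t * t) + (2 * ⟪C u, v⟫) * t + ⟪C u, u⟫ := by
      have hsym : ⟪C v, u⟫ = ⟪C u, v⟫ := by
        rw [hsa v u, real_inner_comm]
      simp only [map_add, map_smul, inner_add_left, inner_add_right,
        real_inner_smul_left, real_inner_smul_right]
      rw [hsym]; ring
    linarith [hx ▸ h]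
  have hd := discrim_le_zero key
  unfold discrim at hd
  nlinarith [hd]

/-- Brezzi inf-sup condition (4) in the paper's Theorem 3.2, with constant
`β = (1 + c λ_max)^{-1/2}`: assuming solvability with stability of the displacement-based
problem, for every `ψ ∈ X` the supremum over nonzero `Φ ∈ dom B†` of
`⟪B†Φ, ψ⟫ / ‖Φ‖_Σ` (with `‖Φ‖_Σ` the graph norm) is at least `(1 + c λ_max)^{-1/2} ‖ψ‖`.
`W` is the dense domain of the densely defined operator `B : W → Y`, `domA` is the domain
of the adjoint `B†` (characterized by `hdom`), and `Badj` realizes `B†`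
(characterized by `hadj`). -/
theorem stmt7
    {X Y : Type*} [NormedAddCommGroup X] [InnerProductSpace ℝ X] [CompleteSpace X]
    [NormedAddCommGroup Y] [InnerProductSpace ℝ Y] [CompleteSpace Y]
    (W : Submodule ℝ X) (hW : Dense (W : Set X))
    (B : W →ₗ[ℝ] Y) (domA : Set Y) (Badj : Y → X)
    (hdom : ∀ Φ : Y, Φ ∈ domA ↔ ∃ G : X, ∀ ψ : W, ⟪B ψ, Φ⟫ = ⟪G, (ψ : X)⟫)
    (hadj : ∀ Φ ∈ domA, ∀ ψ : W, ⟪Badj Φ, (ψ : X)⟫ = ⟪B ψ, Φ⟫)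
    (C : Y →L[ℝ] Y) (lmax c : ℝ) (hlmax : 0 < lmax) (hc : 0 < c)
    (hsa : ∀ x y : Y, ⟪C x, y⟫ = ⟪x, C y⟫)
    (hbound : ∀ y : Y, 0 ≤ ⟪C y, y⟫ ∧ ⟪C y, y⟫ ≤ lmax * ‖y‖ ^ 2)
    (hsolve : ∀ ψ : X, ∃ φψ : W,
      (∀ v : W, ⟪C (B φψ), B v⟫ = -⟪ψ, (v : X)⟫) ∧ ‖(φψ : X)‖ ≤ c * ‖ψ‖) :
    ∀ ψ : X,
      (Real.sqrt (1 + c * lmax))⁻¹ * ‖ψ‖ ≤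
        sSup {r : ℝ | ∃ Φ ∈ domA, Φ ≠ 0 ∧
          r = ⟪Badj Φ, ψ⟫ / Real.sqrt (‖Φ‖ ^ 2 + ‖Badj Φ‖ ^ 2)} := by
  intro ψ
  set S : Set ℝ := {r : ℝ | ∃ Φ ∈ domA, Φ ≠ 0 ∧
      r = ⟪Badj Φ, ψ⟫ / Real.sqrt (‖Φ‖ ^ 2 + ‖Badj Φ‖ ^ 2)} with hS
  -- S is bounded above by ‖ψ‖
  have hbdd : BddAbove S := by
    refine ⟨‖ψ‖, fun r hr => ?_⟩
    obtain ⟨Φ, hΦ, hΦne, rfl⟩ := hr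
    have hden : 0 < Real.sqrt (‖Φ‖ ^ 2 + ‖Badj Φ‖ ^ 2) := by
      apply Real.sqrt_pos.mpr
      have h0 : 0 < ‖Φ‖ ^ 2 := pow_pos (norm_pos_iff.mpr hΦne) 2
      nlinarith [sq_nonneg ‖Badj Φ‖]
    rw [div_le_iff₀ hden]
    have h1 : ⟪Badj Φ, ψ⟫ ≤ ‖Badj Φ‖ * ‖ψ‖ := real_inner_le_norm _ _
    have h2 : ‖Badj Φ‖ ≤ Real.sqrt (‖Φ‖ ^ 2 + ‖Badj Φ‖ ^ 2) := by
      have h3 := Real.sqrt_le_sqrt (show ‖Badj Φ‖ ^ 2 ≤ ‖Φ‖ ^ 2 + ‖Badj Φ‖ ^ 2 by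
        nlinarith [sq_nonneg ‖Φ‖])
      rwa [Real.sqrt_sq (norm_nonneg _)] at h3
    calc ⟪Badj Φ, ψ⟫ ≤ ‖Badj Φ‖ * ‖ψ‖ := h1
      _ ≤ Real.sqrt (‖Φ‖ ^ 2 + ‖Badj Φ‖ ^ 2) * ‖ψ‖ :=
          mul_le_mul_of_nonneg_right h2 (norm_nonneg ψ)
      _ = ‖ψ‖ * Real.sqrt (‖Φ‖ ^ 2 + ‖Badj Φ‖ ^ 2) := mul_comm _ _
  by_cases hψ : ψ = 0
  · subst hψ
    simp only [norm_zero, mul_zero]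
    by_cases hne : S.Nonempty
    · obtain ⟨r, hr⟩ := hne
      have hr0 : (0 : ℝ) ≤ r := by
        obtain ⟨Φ, _, _, rfl⟩ := hr
        simp
      calc (0 : ℝ) ≤ r := hr0
        _ ≤ sSup S := le_csSup hbdd (by
            obtain ⟨Φ, h1, h2, h3⟩ := hr
            exact ⟨Φ, h1, h2, h3⟩)
    · rw [Set.not_nonempty_iff_eq_empty.mp hne, Real.sSup_empty]
  · -- main case
    obtain ⟨φ, hφeq, hφbd⟩ := hsolve ψ
    set Φ : Y := -(C (B φ)) with hΦdef
    have hmem : Φ ∈ domA := by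
      rw [hdom]
      refine ⟨ψ, fun v => ?_⟩
      have := hφeq v
      rw [hΦdef, inner_neg_right, real_inner_comm]
      rw [this]; ring
    have hBadj : Badj Φ = ψ := by
      have : Badj Φ - ψ = 0 := by
        apply dense_orth_zero W hW
        intro v
        rw [inner_sub_left, hadj Φ hmem v]
        rw [hΦdef, inner_neg_right, real_inner_comm (C (B φ)) (B v), hφeq v]
        ring
      exact sub_eq_zero.mp this
    have hΦne : Φ ≠ 0 := by
      intro h0
      apply hψ
      rw [← hBadj, h0]
      apply dense_orth_zero W hW
      intro v
      rw [hadj 0 (by rw [h0] at hmem; exact hmem) v]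
      simp
    -- norm bound on Φ
    have hpos : ∀ y : Y, 0 ≤ ⟪C y, y⟫ := fun y => (hbound y).1
    have hCsq : ‖C (B φ)‖ ^ 2 ≤ lmax * ⟪C (B φ), B φ⟫ := by
      set y := B φ
      by_cases hz : C y = 0
      · simp [hz, mul_nonneg hlmax.le (hpos y)]
      · have hcs := psd_cs C hsa hpos y (C y)
        have h1 : ⟪C y, C y⟫ = ‖C y‖ ^ 2 := real_inner_self_eq_norm_sq _
        have h2 : ⟪C (C y), C y⟫ ≤ lmax * ‖C y‖ ^ 2 := (hbound (C y)).2
        have hnz : 0 < ‖C y‖ ^ 2 := pow_pos (norm_pos_iff.mpr hz) 2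
        nlinarith [hpos y, hpos (C y)]
    have hΦbd : ‖Φ‖ ^ 2 ≤ c * lmax * ‖ψ‖ ^ 2 := by
      have h1 : ⟪C (B φ), B φ⟫ = -⟪ψ, (φ : X)⟫ := hφeq φ
      have h2 : -⟪ψ, (φ : X)⟫ ≤ ‖ψ‖ * ‖(φ : X)‖ := by
        have := real_inner_le_norm ψ (-(φ : X))
        simpa [inner_neg_right] using this
      have h3 : ‖ψ‖ * ‖(φ : X)‖ ≤ c * ‖ψ‖ ^ 2 := by
        nlinarith [norm_nonneg ψ, hφbd]
      have hΦn : ‖Φ‖ = ‖C (B φ)‖ := by rw [hΦdef, norm_neg]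
      rw [hΦn]
      nlinarith [hCsq]
    -- the candidate value
    set r : ℝ := ⟪Badj Φ, ψ⟫ / Real.sqrt (‖Φ‖ ^ 2 + ‖Badj Φ‖ ^ 2) with hrdef
    have hrmem : r ∈ S := ⟨Φ, hmem, hΦne, rfl⟩
    have hψpos : 0 < ‖ψ‖ := norm_pos_iff.mpr hψ
    have hkey : (Real.sqrt (1 + c * lmax))⁻¹ * ‖ψ‖ ≤ r := by
      rw [hrdef, hBadj, real_inner_self_eq_norm_sq]
      have hdenle : Real.sqrt (‖Φ‖ ^ 2 + ‖ψ‖ ^ 2) ≤ Real.sqrt (1 + c * lmax) * ‖ψ‖ := by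
        rw [show Real.sqrt (1 + c * lmax) * ‖ψ‖ = Real.sqrt ((1 + c * lmax) * ‖ψ‖ ^ 2) by
          rw [Real.sqrt_mul (by positivity), Real.sqrt_sq (norm_nonneg _)]]
        apply Real.sqrt_le_sqrt
        nlinarith
      have hdenpos : 0 < Real.sqrt (‖Φ‖ ^ 2 + ‖ψ‖ ^ 2) := by
        apply Real.sqrt_pos.mpr; positivity
      have hs : 0 < Real.sqrt (1 + c * lmax) := by
        apply Real.sqrt_pos.mpr; nlinarith
      rw [le_div_iff₀ hdenpos]
      calc (Real.sqrt (1 + c * lmax))⁻¹ * ‖ψ‖ * Real.sqrt (‖Φ‖ ^ 2 + ‖ψ‖ ^ 2)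
          ≤ (Real.sqrt (1 + c * lmax))⁻¹ * ‖ψ‖ * (Real.sqrt (1 + c * lmax) * ‖ψ‖) := by
            apply mul_le_mul_of_nonneg_left hdenle; positivity
        _ = ‖ψ‖ ^ 2 := by field_simp
    exact hkey.trans (le_csSup hbdd hrmem)
end

section
/- Let X and Y be real Hilbert spaces, B a densely defined linear operator from X to Y with dense domain W, and B† its adjoint. Let C : Y → Y be a bounded self-adjoint linear operator with ⟪C y, y⟫ ≥ λ_min ‖y‖² for all y ∈ Y and some λ_min > 0, and let C' : Y → Y be a bounded linear operator with C(C' y) = C'(C y) = y for all y ∈ Y. Assume that for every G ∈ X there exists φ_G ∈ W with ⟪C(Bφ_G), Bψ⟫_Y = ⟪G, ψ⟫_X for all ψ ∈ W. Then for every F ∈ X the mixed problem — find (Φ, φ) ∈ dom B† × X such that ⟪C'Φ, Ψ⟫_Y + ⟪B†Ψ, φ⟫_X = 0 for all Ψ ∈ dom B† and B†Φ = −F — has exactly one solution, and it is given by Φ = −C(Bφ_F) and φ = φ_F; in particular any two elements φ_F, φ_F' ∈ W solving the primal problem for the same F coincide as elements of X. (Abstract form of the paper's Theorem 3.3, the equivalence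 of the displacement-based and mixed variational formulations.) -/
open RealInnerProductSpace

/-- Abstract form of the paper's Theorem 3.3 (equivalence of the displacement-based and
mixed variational formulations): assuming solvability of the primal problem for every
right-hand side, for every `F` the mixed problem has exactly one solution, given by
`Φ = −C(Bφ_F)` and `φ = φ_F`; in particular any two primal solutions for the same `F`
coincide as elements of `X`. `W` is the dense domain of the densely defined operator
`B : W → Y`, `domA` is the domain of the adjoint `B†` (characterized by `hdom`), and
`Badj` realizes `B†` (characterized by `hadj`). -/
theorem stmt8
    {X Y : Type*} [NormedAddCommGroup X] [InnerProductSpace ℝ X] [CompleteSpace X]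
    [NormedAddCommGroup Y] [InnerProductSpace ℝ Y] [CompleteSpace Y]
    (W : Submodule ℝ X) (hW : Dense (W : Set X))
    (B : W →ₗ[ℝ] Y) (domA : Set Y) (Badj : Y → X)
    (hdom : ∀ Φ : Y, Φ ∈ domA ↔ ∃ G : X, ∀ ψ : W, ⟪B ψ, Φ⟫ = ⟪G, (ψ : X)⟫)
    (hadj : ∀ Φ ∈ domA, ∀ ψ : W, ⟪Badj Φ, (ψ : X)⟫ = ⟪B ψ, Φ⟫)
    (C C' : Y →L[ℝ] Y) (lmin : ℝ) (hlmin : 0 < lmin)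
    (hsa : ∀ x y : Y, ⟪C x, y⟫ = ⟪x, C y⟫)
    (hcoercive : ∀ y : Y, lmin * ‖y‖ ^ 2 ≤ ⟪C y, y⟫)
    (hinv1 : ∀ y : Y, C (C' y) = y) (hinv2 : ∀ y : Y, C' (C y) = y)
    (hsolve : ∀ G : X, ∃ φG : W, ∀ ψ : W, ⟪C (B φG), B ψ⟫ = ⟪G, (ψ : X)⟫) :
    ∀ F : X, ∀ φF : W, (∀ ψ : W, ⟪C (B φF), B ψ⟫ = ⟪F, (ψ : X)⟫) →
      -- the pair (−C(Bφ_F), φ_F) solves the mixed problem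
      ((-(C (B φF)) ∈ domA ∧
          (∀ Ψ ∈ domA, ⟪C' (-(C (B φF))), Ψ⟫ + ⟪Badj Ψ, (φF : X)⟫ = 0) ∧
          Badj (-(C (B φF))) = -F) ∧
        -- and it is the only solution of the mixed problem
        (∀ Φ : Y, ∀ φ : X, Φ ∈ domA →
          (∀ Ψ ∈ domA, ⟪C' Φ, Ψ⟫ + ⟪Badj Ψ, φ⟫ = 0) → Badj Φ = -F →
          Φ = -(C (B φF)) ∧ φ = (φF : X)) ∧
        -- in particular, primal solutions for the same F coincide in X
        (∀ φF' : W, (∀ ψ : W, ⟪C (B φF'), B ψ⟫ = ⟪F, (ψ : X)⟫) →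
          (φF' : X) = (φF : X))) := by
  intro F φF hφF
  -- if ⟪x, ψ⟫ = 0 for all ψ ∈ W then x = 0, by density
  have dense0 : ∀ x : X, (∀ ψ : W, ⟪x, (ψ : X)⟫ = 0) → x = 0 := by
    intro x hx
    have hcont : Continuous fun y : X => ⟪x, y⟫ := continuous_const.inner continuous_id
    have heq : (fun y : X => ⟪x, y⟫) = fun _ => (0 : ℝ) :=
      Continuous.ext_on hW hcont continuous_const (by rintro y hy; exact hx ⟨y, hy⟩)
    exact inner_self_eq_zero.mp (congrFun heq x)
  -- the adjoint is uniquely characterized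
  have badj_eq : ∀ Φ ∈ domA, ∀ G : X, (∀ ψ : W, ⟪B ψ, Φ⟫ = ⟪G, (ψ : X)⟫) → Badj Φ = G := by
    intro Φ hΦ G hG
    have h0 : ∀ ψ : W, ⟪Badj Φ - G, (ψ : X)⟫ = 0 := by
      intro ψ
      rw [inner_sub_left, hadj Φ hΦ ψ, hG ψ]; ring
    exact sub_eq_zero.mp (dense0 _ h0)
  -- C' is also coercive, in particular definite
  have hC'def : ∀ y : Y, ⟪C' y, y⟫ = 0 → y = 0 := by
    intro y h
    have h1 : ⟪C (C' y), C' y⟫ = 0 := by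
      rw [hinv1, real_inner_comm]; exact h
    have h2 := hcoercive (C' y)
    rw [h1] at h2
    have h3 : ‖C' y‖ ^ 2 = 0 :=
      le_antisymm (by nlinarith) (sq_nonneg _)
    have h4 : C' y = 0 := norm_eq_zero.mp (pow_eq_zero_iff two_ne_zero |>.mp h3)
    have := hinv1 y
    rw [h4, map_zero] at this
    exact this.symm
  -- part 1, for an arbitrary primal solution
  have part1 : ∀ φ0 : W, (∀ ψ : W, ⟪C (B φ0), B ψ⟫ = ⟪F, (ψ : X)⟫) →
      (-(C (B φ0)) ∈ domA ∧
        (∀ Ψ ∈ domA, ⟪C' (-(C (B φ0))), Ψ⟫ + ⟪Badj Ψ, (φ0 : X)⟫ = 0) ∧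
        Badj (-(C (B φ0))) = -F) := by
    intro φ0 h0
    have hinner : ∀ ψ : W, ⟪B ψ, -(C (B φ0))⟫ = ⟪-F, (ψ : X)⟫ := by
      intro ψ
      rw [inner_neg_right, inner_neg_left, real_inner_comm, h0 ψ]
    have hmem : -(C (B φ0)) ∈ domA := (hdom _).mpr ⟨-F, hinner⟩
    refine ⟨hmem, ?_, badj_eq _ hmem _ hinner⟩
    intro Ψ hΨ
    have hC' : C' (-(C (B φ0))) = -(B φ0) := by rw [map_neg, hinv2]
    rw [hC', inner_neg_left, hadj Ψ hΨ φ0]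
    ring
  have hm := part1 φF hφF
  -- uniqueness
  have huniq : ∀ Φ : Y, ∀ φ : X, Φ ∈ domA →
      (∀ Ψ ∈ domA, ⟪C' Φ, Ψ⟫ + ⟪Badj Ψ, φ⟫ = 0) → Badj Φ = -F →
      Φ = -(C (B φF)) ∧ φ = (φF : X) := by
    intro Φ φ hΦ hmix hBΦ
    set Φ0 := -(C (B φF)) with hΦ0def
    -- the difference D
    set D := Φ - Φ0 with hDdef
    have hDinner : ∀ ψ : W, ⟪B ψ, D⟫ = ⟪(0 : X), (ψ : X)⟫ := by
      intro ψ
      rw [inner_sub_right, ← hadj Φ hΦ ψ, ← hadj Φ0 hm.1 ψ, hBΦ, hm.2.2,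
        inner_zero_left]
      ring
    have hDmem : D ∈ domA := (hdom _).mpr ⟨0, hDinner⟩
    have hBD : Badj D = 0 := badj_eq _ hDmem _ hDinner
    have e1 := hmix D hDmem
    have e2 := hm.2.1 D hDmem
    rw [hBD, inner_zero_left, add_zero] at e1 e2
    have hCD : ⟪C' D, D⟫ = 0 := by
      rw [hDdef, map_sub, inner_sub_left, e1, e2]; ring
    have hD0 : D = 0 := hC'def D hCD
    have hΦeq : Φ = Φ0 := sub_eq_zero.mp hD0
    refine ⟨hΦeq, ?_⟩
    -- now φ = φF
    have hzero : ∀ Ψ ∈ domA, ⟪Badj Ψ, φ - (φF : X)⟫ = 0 := by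
      intro Ψ hΨ
      have e3 := hmix Ψ hΨ
      have e4 := hm.2.1 Ψ hΨ
      rw [hΦeq] at e3
      rw [inner_sub_right]
      linarith
    obtain ⟨χ, hχ⟩ := hsolve (φ - (φF : X))
    have hinner : ∀ ψ : W, ⟪B ψ, C (B χ)⟫ = ⟪φ - (φF : X), (ψ : X)⟫ := by
      intro ψ; rw [real_inner_comm]; exact hχ ψ
    have hmem : C (B χ) ∈ domA := (hdom _).mpr ⟨_, hinner⟩
    have hBadjχ : Badj (C (B χ)) = φ - (φF : X) := badj_eq _ hmem _ hinner
    have := hzero _ hmem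
    rw [hBadjχ] at this
    have := inner_self_eq_zero.mp this
    exact sub_eq_zero.mp this
  refine ⟨hm, huniq, ?_⟩
  -- primal uniqueness
  intro φF' h'
  have hm' := part1 φF' h'
  exact (huniq _ _ hm'.1 hm'.2.1 hm'.2.2).2
end
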